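/- Let B be a commutative monoid and let ℤ[B] be the monoid ring graded by a monoid homomorphism dim : B → ℕ. Suppose a commutative ring R carries an exhaustive filtration {Fₙ} by additive subgroups with Fₙ·Fₘ ⊆ Fₙ₊ₘ, and a group isomorphism Φ : R → ℤ[B] with Φ(Fₙ) equal to the span of elements of B of dimension ≤ n, such that for b, b' ∈ B with dim b = n, dim b' = m, the product in R of their preimages lies in Φ⁻¹(bb') + Fₙ₊ₘ₋₁. Then the associated graded ring ⊕ₙ Fₙ/Fₙ₋₁ of R is isomorphic as a ring to ℤ[B]. -/

import Mathlib

/-!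
Sending the class of `x ∈ Fₙ` to the degree `n` component of `Φ x` is well defined on
`Fₙ/Fₙ₋₁`, because `Φ(Fₙ₋₁)` is spanned by elements of `B` of dimension `< n`. This gives an
additive isomorphism `⊕ₙ Fₙ/Fₙ₋₁ ≃ ℤ[B]`, inverse to `b ↦ [Φ⁻¹ b] ∈ F_{dim b}/F_{dim b - 1}`.
It is multiplicative on homogeneous classes: by biadditivity it suffices to check this on
`b, b' ∈ B`, where `Φ⁻¹ b · Φ⁻¹ b'` differs from `Φ⁻¹ (b b')` by an element of lower filtration,
which the projection to degree `dim b + dim b'` kills. The multiplication of the associated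
graded ring is then the ring structure of `ℤ[B]` transported along this isomorphism.
-/

/-- The filtration extended by `F₋₁ = ⊥` (index shifted: `Fprev F n = F (n-1)`). -/
def Fprev {R : Type*} [AddCommGroup R] (F : ℕ → AddSubgroup R) : ℕ → AddSubgroup R
  | 0 => ⊥
  | n + 1 => F n

/-- The `n`-th graded piece `Gₙ = Fₙ/Fₙ₋₁` of a filtration. -/
abbrev GradedPiece {R : Type*} [AddCommGroup R] (F : ℕ → AddSubgroup R) (n : ℕ) :=
  (F n) ⧸ ((Fprev F n).addSubgroupOf (F n))

open AddSubgroup DirectSum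

namespace MonoidAlgebra

section Semiring

variable {k B ι : Type*} [Semiring k]

noncomputable def degreePart (dim : B → ι) (i : ι) : MonoidAlgebra k B →+ MonoidAlgebra k B :=
  letI := Classical.decPred fun b => dim b = i
  coeffAddEquiv.symm.toAddMonoidHom.comp
    ((Finsupp.filterAddHom fun b => dim b = i).comp coeffAddEquiv.toAddMonoidHom)

theorem degreePart_single [DecidableEq ι] (dim : B → ι) (i : ι) (b : B) (r : k) :
    degreePart dim i (single b r) = if dim b = i then single b r else 0 := by
  let _ := Classical.decPred fun b => dim b = i
  split_ifs with h
  · exact congrArg ofCoeff (Finsupp.filter_single_of_pos _ h)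
  · exact congrArg ofCoeff (Finsupp.filter_single_of_neg _ h)

end Semiring

section Ring

variable (k : Type*) {B ι : Type*} [Ring k] [Preorder ι]

noncomputable def degreeLE (dim : B → ι) (n : ι) : AddSubgroup (MonoidAlgebra k B) :=
  closure ((fun b => single b (1 : k)) '' {b | dim b ≤ n})

variable {k}

theorem single_one_mem_degreeLE {dim : B → ι} {n : ι} {b : B} (hb : dim b ≤ n) :
    single b (1 : k) ∈ degreeLE k dim n :=
  subset_closure ⟨b, hb, rfl⟩

theorem degreePart_eq_zero_of_mem_degreeLE {dim : B → ι} {n i : ι} (hni : n < i)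
    {f : MonoidAlgebra k B} (hf : f ∈ degreeLE k dim n) : degreePart dim i f = 0 := by
  induction hf using closure_induction with
  | mem g hg =>
    obtain ⟨b, hb, rfl⟩ := hg
    classical
    rw [degreePart_single, if_neg (hb.trans_lt hni).ne]
  | zero => exact map_zero _
  | add x y _ _ hx hy => rw [map_add, hx, hy, add_zero]
  | neg x _ hx => rw [map_neg, hx, neg_zero]

end Ring

end MonoidAlgebra

open MonoidAlgebra

abbrev AssociatedGraded {R : Type*} [AddCommGroup R] (F : ℕ → AddSubgroup R) :=
  ⨁ n, GradedPiece F n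

def AssociatedGraded.mk {R : Type*} [AddCommGroup R] (F : ℕ → AddSubgroup R) (n : ℕ) :
    F n →+ AssociatedGraded F :=
  (of (fun k => GradedPiece F k) n).comp (QuotientAddGroup.mk' _)

theorem AssociatedGraded.mk_eq_zero_of_mem_Fprev {R : Type*} [AddCommGroup R]
    {F : ℕ → AddSubgroup R} {n : ℕ} {x : F n} (hx : (x : R) ∈ Fprev F n) :
    AssociatedGraded.mk F n x = 0 := by
  rw [AssociatedGraded.mk, AddMonoidHom.comp_apply, QuotientAddGroup.mk'_apply,
    (QuotientAddGroup.eq_zero_iff _).2 (mem_addSubgroupOf.2 hx), map_zero]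

section Filtration

variable {B : Type*} [CommMonoid B] {dim : B → ℕ} {R : Type*} [CommRing R]
  {F : ℕ → AddSubgroup R} {Φ : R ≃+ MonoidAlgebra ℤ B}

variable (dim F Φ) in
def MapsFiltrationOntoDegreeLE : Prop :=
  ∀ n, (F n).map Φ.toAddMonoidHom = degreeLE ℤ dim n

theorem symm_mem_iff_mem_degreeLE (hΦ : MapsFiltrationOntoDegreeLE dim F Φ) {n : ℕ}
    {f : MonoidAlgebra ℤ B} : Φ.symm f ∈ F n ↔ f ∈ degreeLE ℤ dim n := by
  rw [← hΦ, mem_map_equiv]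

theorem apply_mem_degreeLE_iff (hΦ : MapsFiltrationOntoDegreeLE dim F Φ) {n : ℕ}
    {x : R} : Φ x ∈ degreeLE ℤ dim n ↔ x ∈ F n := by
  rw [← symm_mem_iff_mem_degreeLE hΦ, Φ.symm_apply_apply]

theorem degreePart_apply_eq_zero_of_mem_Fprev
    (hΦ : MapsFiltrationOntoDegreeLE dim F Φ) {n i : ℕ} (hni : n ≤ i) {x : R}
    (hx : x ∈ Fprev F n) : degreePart dim i (Φ x) = 0 := by
  cases n with
  | zero => rw [Fprev, mem_bot] at hx; rw [hx, map_zero, map_zero]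
  | succ n => exact degreePart_eq_zero_of_mem_degreeLE (by omega) ((apply_mem_degreeLE_iff hΦ).2 hx)

noncomputable def gradedPieceToMonoidAlgebra
    (hΦ : MapsFiltrationOntoDegreeLE dim F Φ) (n : ℕ) :
    GradedPiece F n →+ MonoidAlgebra ℤ B :=
  QuotientAddGroup.lift _
    ((degreePart dim n).comp ((Φ : R →+ MonoidAlgebra ℤ B).comp (F n).subtype))
    fun _ hx => degreePart_apply_eq_zero_of_mem_Fprev hΦ le_rfl (mem_addSubgroupOf.1 hx)

noncomputable def associatedGradedToMonoidAlgebra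
    (hΦ : MapsFiltrationOntoDegreeLE dim F Φ) :
    AssociatedGraded F →+ MonoidAlgebra ℤ B :=
  toAddMonoid (gradedPieceToMonoidAlgebra hΦ)

theorem associatedGradedToMonoidAlgebra_mk
    (hΦ : MapsFiltrationOntoDegreeLE dim F Φ) (n : ℕ) (x : F n) :
    associatedGradedToMonoidAlgebra hΦ (AssociatedGraded.mk F n x) = degreePart dim n (Φ x) :=
  toAddMonoid_of _ _ _

theorem symm_single_one_mem (hΦ : MapsFiltrationOntoDegreeLE dim F Φ)
    {n : ℕ} {b : B} (hb : dim b ≤ n) : Φ.symm (single b 1) ∈ F n :=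
  (symm_mem_iff_mem_degreeLE hΦ).2 (single_one_mem_degreeLE hb)

noncomputable def monoidAlgebraToAssociatedGraded
    (hΦ : MapsFiltrationOntoDegreeLE dim F Φ) :
    MonoidAlgebra ℤ B →+ AssociatedGraded F :=
  (Finsupp.liftAddHom fun b => zmultiplesHom _
      (AssociatedGraded.mk F (dim b) ⟨Φ.symm (single b 1), symm_single_one_mem hΦ le_rfl⟩)).comp
    coeffAddEquiv.toAddMonoidHom

theorem monoidAlgebraToAssociatedGraded_single
    (hΦ : MapsFiltrationOntoDegreeLE dim F Φ) (b : B) (z : ℤ) :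
    monoidAlgebraToAssociatedGraded hΦ (single b z) =
      z • AssociatedGraded.mk F (dim b) ⟨Φ.symm (single b 1), symm_single_one_mem hΦ le_rfl⟩ :=
  Finsupp.liftAddHom_apply_single (M := ℤ) _ b z

theorem monoidAlgebraToAssociatedGraded_degreePart
    (hΦ : MapsFiltrationOntoDegreeLE dim F Φ) {n : ℕ} {f : MonoidAlgebra ℤ B}
    (hf : f ∈ degreeLE ℤ dim n) :
    monoidAlgebraToAssociatedGraded hΦ (degreePart dim n f) =
      AssociatedGraded.mk F n ⟨Φ.symm f, (symm_mem_iff_mem_degreeLE hΦ).2 hf⟩ := by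
  induction hf using closure_induction with
  | mem f hf =>
    obtain ⟨b, hb : dim b ≤ n, rfl⟩ := hf
    rw [degreePart_single]
    split_ifs with hbn
    · subst hbn
      rw [monoidAlgebraToAssociatedGraded_single, one_smul]
    · obtain ⟨n, rfl⟩ : ∃ n', n = n' + 1 := Nat.exists_eq_add_one.2 (by omega)
      rw [map_zero, AssociatedGraded.mk_eq_zero_of_mem_Fprev]
      exact symm_single_one_mem hΦ (by omega)
  | zero =>
    rw [map_zero, map_zero, eq_comm, ← map_zero (AssociatedGraded.mk F n)]
    congr 1; ext; simp
  | add x y _ _ ihx ihy =>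
    rw [map_add, map_add, ihx, ihy, ← map_add]; congr 1; ext; simp
  | neg x _ ihx => rw [map_neg, map_neg, ihx, ← map_neg]; congr 1; ext; simp

noncomputable def associatedGradedEquiv
    (hΦ : MapsFiltrationOntoDegreeLE dim F Φ) :
    AssociatedGraded F ≃+ MonoidAlgebra ℤ B where
  toFun := associatedGradedToMonoidAlgebra hΦ
  invFun := monoidAlgebraToAssociatedGraded hΦ
  left_inv x := by
    induction x using DirectSum.induction_on with
    | zero => simp only [map_zero]
    | of n q =>
      induction q using QuotientAddGroup.induction_on with
      | H x =>
        change monoidAlgebraToAssociatedGraded hΦ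
            (associatedGradedToMonoidAlgebra hΦ (AssociatedGraded.mk F n x)) =
          AssociatedGraded.mk F n x
        rw [associatedGradedToMonoidAlgebra_mk,
          monoidAlgebraToAssociatedGraded_degreePart hΦ ((apply_mem_degreeLE_iff hΦ).2 x.2)]
        simp only [AddEquiv.symm_apply_apply]
    | add x y hx hy => rw [map_add, map_add, hx, hy]
  right_inv f := by
    induction f using MonoidAlgebra.induction_linear with
    | zero => simp only [map_zero]
    | add x y hx hy => rw [map_add, map_add, hx, hy]
    | single b z =>
      rw [monoidAlgebraToAssociatedGraded_single, map_zsmul, associatedGradedToMonoidAlgebra_mk,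
        AddEquiv.apply_symm_apply, degreePart_single, if_pos rfl, smul_single, smul_eq_mul, mul_one]
  map_add' := map_add _

theorem associatedGradedEquiv_mk
    (hΦ : MapsFiltrationOntoDegreeLE dim F Φ) (n : ℕ) (x : F n) :
    associatedGradedEquiv hΦ (AssociatedGraded.mk F n x) = degreePart dim n (Φ x) :=
  associatedGradedToMonoidAlgebra_mk hΦ n x

theorem degreePart_mul_degreePart (hdim_mul : ∀ b b' : B, dim (b * b') = dim b + dim b')
    (hΦ : MapsFiltrationOntoDegreeLE dim F Φ)
    (hcompat : ∀ b b' : B, Φ.symm (single b 1) * Φ.symm (single b' 1) -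
      Φ.symm (single (b * b') 1) ∈ Fprev F (dim b + dim b'))
    {n m : ℕ} {f g : MonoidAlgebra ℤ B} (hf : f ∈ degreeLE ℤ dim n) (hg : g ∈ degreeLE ℤ dim m) :
    degreePart dim n f * degreePart dim m g = degreePart dim (n + m) (Φ (Φ.symm f * Φ.symm g)) := by
  induction hf using closure_induction with
  | mem f hf =>
    induction hg using closure_induction with
    | mem g hg =>
      obtain ⟨b, hb, rfl⟩ := hf
      obtain ⟨b', hb', rfl⟩ := hg
      simp only [Set.mem_ofPred_eq] at hb hb'
      rw [← sub_add_cancel (Φ.symm (single b 1) * _) (Φ.symm (single (b * b') 1)), map_add, map_add,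
        degreePart_apply_eq_zero_of_mem_Fprev hΦ (by omega) (hcompat b b'), zero_add,
        Φ.apply_symm_apply, degreePart_single, degreePart_single, degreePart_single, hdim_mul]
      by_cases h1 : dim b = n
      · by_cases h2 : dim b' = m
        · rw [if_pos h1, if_pos h2, if_pos (by omega), single_mul_single, one_mul]
        · rw [if_neg h2, mul_zero, if_neg (by omega)]
      · rw [if_neg h1, zero_mul, if_neg (by omega)]
    | zero => simp only [map_zero, mul_zero]
    | add x y _ _ ihx ihy => simp only [map_add, mul_add, ihx, ihy]
    | neg x _ ihx => simp only [map_neg, mul_neg, ihx]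
  | zero => simp only [map_zero, zero_mul]
  | add x y _ _ ihx ihy => simp only [map_add, add_mul, ihx, ihy]
  | neg x _ ihx => simp only [map_neg, neg_mul, ihx]

theorem associatedGradedEquiv_mk_mul_mk (hdim_mul : ∀ b b' : B, dim (b * b') = dim b + dim b')
    (hΦ : MapsFiltrationOntoDegreeLE dim F Φ)
    (hcompat : ∀ b b' : B, Φ.symm (single b 1) * Φ.symm (single b' 1) -
      Φ.symm (single (b * b') 1) ∈ Fprev F (dim b + dim b'))
    {n m : ℕ} (x : F n) (y : F m) (hxy : (x : R) * y ∈ F (n + m)) :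
    associatedGradedEquiv hΦ (AssociatedGraded.mk F n x) *
        associatedGradedEquiv hΦ (AssociatedGraded.mk F m y) =
      associatedGradedEquiv hΦ (AssociatedGraded.mk F (n + m) ⟨x * y, hxy⟩) := by
  simp only [associatedGradedEquiv_mk]
  rw [degreePart_mul_degreePart hdim_mul hΦ hcompat ((apply_mem_degreeLE_iff hΦ).2 x.2)
    ((apply_mem_degreeLE_iff hΦ).2 y.2), Φ.symm_apply_apply, Φ.symm_apply_apply]

end Filtration

theorem associated_graded_iso_monoid_ring_general {B : Type*} [CommMonoid B]
    (dim : B → ℕ)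
    (hdim_mul : ∀ b b' : B, dim (b * b') = dim b + dim b')
    {R : Type*} [CommRing R]
    (F : ℕ → AddSubgroup R)
    (hmul : ∀ (n m : ℕ) (x y : R), x ∈ F n → y ∈ F m → x * y ∈ F (n + m))
    (Φ : R ≃+ MonoidAlgebra ℤ B)
    (hΦ : ∀ n : ℕ, (F n).map Φ.toAddMonoidHom =
      AddSubgroup.closure ((fun b => MonoidAlgebra.single b (1 : ℤ)) '' {b | dim b ≤ n}))
    (hcompat : ∀ b b' : B,
      Φ.symm (MonoidAlgebra.single b 1) * Φ.symm (MonoidAlgebra.single b' 1) -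
        Φ.symm (MonoidAlgebra.single (b * b') 1) ∈ Fprev F (dim b + dim b')) :
    ∃ mul : (DirectSum ℕ fun k => GradedPiece F k) → (DirectSum ℕ fun k => GradedPiece F k) →
        (DirectSum ℕ fun k => GradedPiece F k),
      (∀ x y, mul x y = mul y x) ∧
      (∀ x y z, mul (mul x y) z = mul x (mul y z)) ∧
      (∀ x y z, mul x (y + z) = mul x y + mul x z) ∧
      (∀ x y z, mul (x + y) z = mul x z + mul y z) ∧
      (∃ one : DirectSum ℕ fun k => GradedPiece F k,
        (∀ x, mul one x = x) ∧
        (∀ (n m : ℕ) (x : F n) (y : F m),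
          mul (DirectSum.of (fun k => GradedPiece F k) n (QuotientAddGroup.mk x))
              (DirectSum.of (fun k => GradedPiece F k) m (QuotientAddGroup.mk y)) =
            DirectSum.of (fun k => GradedPiece F k) (n + m)
              (QuotientAddGroup.mk ⟨(x : R) * y, hmul n m x y x.2 y.2⟩)) ∧
        ∃ e : (DirectSum ℕ fun k => GradedPiece F k) ≃+ MonoidAlgebra ℤ B,
          (∀ x y, e (mul x y) = e x * e y) ∧ e one = 1) := by
  let e := associatedGradedEquiv (dim := dim) hΦ
  refine ⟨fun x y => e.symm (e x * e y), fun x y => congrArg e.symm (mul_comm _ _),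
    fun x y z => by simp only [AddEquiv.apply_symm_apply, mul_assoc],
    fun x y z => by simp only [map_add, mul_add], fun x y z => by simp only [map_add, add_mul],
    e.symm 1, fun x => by simp only [AddEquiv.apply_symm_apply, one_mul, AddEquiv.symm_apply_apply],
    fun n m x y => ?_, e, fun x y => e.apply_symm_apply _, e.apply_symm_apply 1⟩
  rw [AddEquiv.symm_apply_eq]
  exact associatedGradedEquiv_mk_mul_mk hdim_mul hΦ hcompat x y _

/-- Let `B` be a commutative monoid graded by a monoid homomorphism `dim : B → ℕ`, and
let `R` be a commutative ring with an exhaustive multiplicative filtration `{Fₙ}` and a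
group isomorphism `Φ : R ≃ ℤ[B]` sending `Fₙ` onto the span of the elements of `B` of
dimension at most `n`, such that for `b, b' ∈ B` the product in `R` of the preimages of
`b` and `b'` lies in `Φ⁻¹(b·b') + F_{dim b + dim b' - 1}`.  Then the associated graded
ring `⊕ₙ Fₙ/Fₙ₋₁` of `R` is isomorphic as a ring to the monoid ring `ℤ[B]`. -/
theorem associated_graded_iso_monoid_ring {B : Type*} [CommMonoid B]
    (dim : B → ℕ) (hdim_one : dim 1 = 0)
    (hdim_mul : ∀ b b' : B, dim (b * b') = dim b + dim b')
    {R : Type*} [CommRing R]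
    (F : ℕ → AddSubgroup R) (hmono : Monotone F) (hexh : (⨆ n, F n) = ⊤)
    (hmul : ∀ (n m : ℕ) (x y : R), x ∈ F n → y ∈ F m → x * y ∈ F (n + m))
    (Φ : R ≃+ MonoidAlgebra ℤ B)
    (hΦ : ∀ n : ℕ, (F n).map Φ.toAddMonoidHom =
      AddSubgroup.closure ((fun b => MonoidAlgebra.single b (1 : ℤ)) '' {b | dim b ≤ n}))
    (hcompat : ∀ b b' : B,
      Φ.symm (MonoidAlgebra.single b 1) * Φ.symm (MonoidAlgebra.single b' 1) -
        Φ.symm (MonoidAlgebra.single (b * b') 1) ∈ Fprev F (dim b + dim b')) :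
    ∃ mul : (DirectSum ℕ fun k => GradedPiece F k) → (DirectSum ℕ fun k => GradedPiece F k) →
        (DirectSum ℕ fun k => GradedPiece F k),
      (∀ x y, mul x y = mul y x) ∧
      (∀ x y z, mul (mul x y) z = mul x (mul y z)) ∧
      (∀ x y z, mul x (y + z) = mul x y + mul x z) ∧
      (∀ x y z, mul (x + y) z = mul x z + mul y z) ∧
      (∃ one : DirectSum ℕ fun k => GradedPiece F k,
        (∀ x, mul one x = x) ∧
        (∀ (n m : ℕ) (x : F n) (y : F m),
          mul (DirectSum.of (fun k => GradedPiece F k) n (QuotientAddGroup.mk x))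
              (DirectSum.of (fun k => GradedPiece F k) m (QuotientAddGroup.mk y)) =
            DirectSum.of (fun k => GradedPiece F k) (n + m)
              (QuotientAddGroup.mk ⟨(x : R) * y, hmul n m x y x.2 y.2⟩)) ∧
        ∃ e : (DirectSum ℕ fun k => GradedPiece F k) ≃+ MonoidAlgebra ℤ B,
          (∀ x y, e (mul x y) = e x * e y) ∧ e one = 1) :=
  associated_graded_iso_monoid_ring_general dim hdim_mul F hmul Φ hΦ hcompat
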